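/- Let ρ1 = (1/7, 2/7, 4/7), ρ2 = (2/7, 4/7, 1/7), ρ3 = (4/7, 1/7, 2/7) in ℚ³, and let L be the ℤ-submodule of ℚ³ generated by the standard basis vectors e1, e2, e3 together with ρ1, ρ2, ρ3. Then there exists a ℤ-module isomorphism φ from L onto ℤ³ satisfying φ(ρ1) = (0, 0, 1), φ(ρ2) = (0, −1, 1), φ(ρ3) = (1, 0, 1); moreover this φ satisfies φ(e3) = (0, 1, 1) and φ(e2) = (−1, −2, 1). (These are the ray generators ρ'1, ..., ρ'5 of the fan of the total space of the line bundle O_{F2}(D) over the Hirzebruch surface F2, so the lattice isomorphism matches the subfan Σ1 of the resolution with the fan of O_{F2}(D).) -/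

import Mathlib

/-- `ρ1 = (1/7, 2/7, 4/7)`. -/
def ρ1 : Fin 3 → ℚ := ![1/7, 2/7, 4/7]
/-- `ρ2 = (2/7, 4/7, 1/7)`. -/
def ρ2 : Fin 3 → ℚ := ![2/7, 4/7, 1/7]
/-- `ρ3 = (4/7, 1/7, 2/7)`. -/
def ρ3 : Fin 3 → ℚ := ![4/7, 1/7, 2/7]

/-- The standard basis vectors `e1, e2, e3` of `ℚ³`. -/
def e : Fin 3 → (Fin 3 → ℚ) := fun i => Pi.single i 1

/-- The lattice `L ⊂ ℚ³` generated by `e1, e2, e3, ρ1, ρ2, ρ3`. -/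
def L : Submodule ℤ (Fin 3 → ℚ) :=
  Submodule.span ℤ {e 0, e 1, e 2, ρ1, ρ2, ρ3}

/-!
The values prescribed at `ρ1`, `ρ3`, `e3` force `φ` to send `ρ3 - ρ1`, `e3 - ρ1`, `ρ1` to the
standard basis of `ℤ³`. These three vectors do form a `ℤ`-basis of `L`: their determinant is
`-1/7 ≠ 0`, and each of the six generators of `L` is an integral combination of them. So `φ` is
the coordinate map in this basis, and the five required values are coordinate computations.
-/

theorem Module.Basis.equivFun_eq_iff_coe_eq_sum {ι R M : Type*} [Fintype ι] [Semiring R]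
    [AddCommMonoid M] [Module R M] {L : Submodule R M} (b : Module.Basis ι R L) {v : ι → M}
    (hb : ∀ i, (b i : M) = v i) (x : L) (c : ι → R) :
    b.equivFun x = c ↔ (x : M) = ∑ i, c i • v i := by
  rw [← LinearEquiv.eq_symm_apply, Module.Basis.equivFun_symm_apply, Subtype.ext_iff]
  simp only [Submodule.coe_sum, Submodule.coe_smul, hb]

theorem e_zero : e 0 = ![1, 0, 0] := by
  ext j; fin_cases j <;> simp [e]

theorem e_one : e 1 = ![0, 1, 0] := by
  ext j; fin_cases j <;> simp [e]

theorem e_two : e 2 = ![0, 0, 1] := by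
  ext j; fin_cases j <;> simp [e]

def u : Fin 3 → Fin 3 → ℚ := ![ρ3 - ρ1, e 2 - ρ1, ρ1]

theorem sum_smul_u (a b c : ℤ) :
    ∑ i, (![a, b, c] : Fin 3 → ℤ) i • u i =
      ![(3 * a - b + c : ℚ) / 7, (-a - 2 * b + 2 * c : ℚ) / 7,
        (-2 * a + 3 * b + 4 * c : ℚ) / 7] := by
  ext j
  fin_cases j <;> simp [Fin.sum_univ_three, u, ρ1, ρ3, e_two] <;> ring

theorem e0_eq_sum : e 0 = ∑ i, (![2, 0, 1] : Fin 3 → ℤ) i • u i := by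
  rw [e_zero, sum_smul_u]; norm_num

theorem e1_eq_sum : e 1 = ∑ i, (![-1, -2, 1] : Fin 3 → ℤ) i • u i := by
  rw [e_one, sum_smul_u]; norm_num

theorem e2_eq_sum : e 2 = ∑ i, (![0, 1, 1] : Fin 3 → ℤ) i • u i := by
  rw [e_two, sum_smul_u]; norm_num

theorem ρ1_eq_sum : ρ1 = ∑ i, (![0, 0, 1] : Fin 3 → ℤ) i • u i := by
  rw [ρ1, sum_smul_u]; norm_num

theorem ρ2_eq_sum : ρ2 = ∑ i, (![0, -1, 1] : Fin 3 → ℤ) i • u i := by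
  rw [ρ2, sum_smul_u]; norm_num

theorem ρ3_eq_sum : ρ3 = ∑ i, (![1, 0, 1] : Fin 3 → ℤ) i • u i := by
  rw [ρ3, sum_smul_u]; norm_num

theorem linearIndependent_u : LinearIndependent ℤ u := by
  have hdet : (Matrix.of u).det = -1 / 7 := by
    simp [Matrix.det_fin_three, u, ρ1, ρ3, e_two]
    norm_num
  have hli := Matrix.linearIndependent_rows_of_det_ne_zero (A := Matrix.of u) (by norm_num [hdet])
  exact hli.restrict_scalars' ℤ

theorem span_u : Submodule.span ℤ (Set.range u) = L := by
  apply le_antisymm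
  · rw [Submodule.span_le, Set.range_subset_iff]
    have gen_mem : ∀ x ∈ ({e 0, e 1, e 2, ρ1, ρ2, ρ3} : Set (Fin 3 → ℚ)), x ∈ L :=
      fun x hx => Submodule.subset_span hx
    intro i
    fin_cases i
    · exact L.sub_mem (gen_mem _ (by simp)) (gen_mem _ (by simp))
    · exact L.sub_mem (gen_mem _ (by simp)) (gen_mem _ (by simp))
    · exact gen_mem _ (by simp [u])
  · rw [L, Submodule.span_le]
    have sum_mem : ∀ (c : Fin 3 → ℤ), ∑ i, c i • u i ∈ Submodule.span ℤ (Set.range u) :=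
      fun c => Submodule.mem_span_range_iff_exists_fun ℤ |>.2 ⟨c, rfl⟩
    simp only [Set.insert_subset_iff, Set.singleton_subset_iff, SetLike.mem_coe]
    rw [e0_eq_sum, e1_eq_sum, e2_eq_sum, ρ1_eq_sum, ρ2_eq_sum, ρ3_eq_sum]
    exact ⟨sum_mem _, sum_mem _, sum_mem _, sum_mem _, sum_mem _, sum_mem _⟩

noncomputable def basisL : Module.Basis (Fin 3) ℤ L :=
  (Module.Basis.span linearIndependent_u).map (LinearEquiv.ofEq _ _ span_u)

theorem coe_basisL (i : Fin 3) : (basisL i : Fin 3 → ℚ) = u i := by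
  simp [basisL, Module.Basis.span_apply]

/-- There is a `ℤ`-module isomorphism `φ : L ≃ ℤ³` with `φ(ρ1) = (0,0,1)`,
`φ(ρ2) = (0,−1,1)`, `φ(ρ3) = (1,0,1)`, `φ(e3) = (0,1,1)`, `φ(e2) = (−1,−2,1)`:
the lattice isomorphism matching the subfan `Σ₁` of the resolution with the fan
of the line bundle `O_{F₂}(D)` over the Hirzebruch surface `F₂`. -/
theorem stmt_11 (h1 : ρ1 ∈ L) (h2 : ρ2 ∈ L) (h3 : ρ3 ∈ L)
    (he2 : e 1 ∈ L) (he3 : e 2 ∈ L) :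
    ∃ φ : L ≃ₗ[ℤ] (Fin 3 → ℤ),
      φ ⟨ρ1, h1⟩ = ![0, 0, 1] ∧
      φ ⟨ρ2, h2⟩ = ![0, -1, 1] ∧
      φ ⟨ρ3, h3⟩ = ![1, 0, 1] ∧
      φ ⟨e 2, he3⟩ = ![0, 1, 1] ∧
      φ ⟨e 1, he2⟩ = ![-1, -2, 1] := by
  have hφ := basisL.equivFun_eq_iff_coe_eq_sum coe_basisL
  exact ⟨basisL.equivFun, (hφ _ _).2 ρ1_eq_sum, (hφ _ _).2 ρ2_eq_sum, (hφ _ _).2 ρ3_eq_sum,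
    (hφ _ _).2 e2_eq_sum, (hφ _ _).2 e1_eq_sum⟩
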